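/- Let A ⊆ B(X) be an abelian, unital, norm-closed subalgebra with split strict multiplicity 2. For every T ∈ algLat(A) there exists a₀ ∈ A such that (T − T_{a₀})(x) ∈ R₁ ⊕ R₂ for every x ∈ X, where Rⱼ is the radical of A/Iⱼ. -/

import Mathlib

/-!
Every closed `A`-invariant subspace constrains `T`. The ranges `A x₁`, `A x₂` are closed, and so is
`A (x₁ + x₂)`: by the open mapping theorem and commutativity, `‖a‖ ≲ ‖a x₁‖ + ‖a x₂‖`, and the
projections of the topological direct sum bound this by `‖a (x₁ + x₂)‖`. Hence `T xⱼ ∈ A xⱼ` and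
`T (x₁ + x₂) = a₀ (x₁ + x₂)`, and directness of the sum forces `T xⱼ = a₀ xⱼ`. The operator
`S = T - a₀` is again in `algLat A` and kills `x₁, x₂`. For a maximal ideal `M ⊇ Iⱼ` the subspace
`M xⱼ` is closed (open mapping again) and invariant, so Gelfand–Mazur, `a = m + λ` with `m ∈ M`,
gives `S (a xⱼ) = S (m xⱼ) ∈ M xⱼ`: the class of `S (a xⱼ)` in `A/Iⱼ` lies in every maximal ideal.
-/
set_option synthInstance.maxHeartbeats 1000000
set_option maxHeartbeats 1000000

/-- The annihilator ideal `Iⱼ = {a ∈ A : a xⱼ = 0}` of a vector. -/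
def annIdeal {X : Type*} [NormedAddCommGroup X] [NormedSpace ℂ X]
    (A : Subalgebra ℂ (X →L[ℂ] X)) (x : X) : Ideal ↥A where
  carrier := {a | (a : X →L[ℂ] X) x = 0}
  add_mem' := fun {a b} ha hb => by
    simp only [Set.mem_setOf_eq] at *
    rw [Subalgebra.coe_add, ContinuousLinearMap.add_apply, ha, hb, add_zero]
  zero_mem' := by simp
  smul_mem' := fun c a ha => by
    simp only [Set.mem_setOf_eq, smul_eq_mul] at *
    rw [Subalgebra.coe_mul, ContinuousLinearMap.mul_apply, ha, map_zero]

/-- `c ∈ A` maps into the radical of `A/I`, i.e. `c` lies in every maximal ideal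
of `A` containing the annihilator ideal of `x`. -/
def inRadical {X : Type*} [NormedAddCommGroup X] [NormedSpace ℂ X]
    (A : Subalgebra ℂ (X →L[ℂ] X)) (x : X) (c : ↥A) : Prop :=
  ∀ M : Ideal ↥A, M.IsMaximal → annIdeal A x ≤ M → c ∈ M

open ContinuousLinearMap

theorem ContinuousLinearMap.isClosed_image_of_ker_le {𝕜 E F : Type*} [NontriviallyNormedField 𝕜]
    [NormedAddCommGroup E] [NormedSpace 𝕜 E] [CompleteSpace E]
    [NormedAddCommGroup F] [NormedSpace 𝕜 F] [CompleteSpace F]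
    (f : E →L[𝕜] F) (hf : IsClosed (Set.range f)) {K : Submodule 𝕜 E}
    (hK : IsClosed (K : Set E)) (hker : f.ker ≤ K) : IsClosed (f '' K) := by
  have hR : IsClosed (f.range : Set F) := by rwa [LinearMap.coe_range]
  have : CompleteSpace f.range := hR.completeSpace_coe
  let g : E →L[𝕜] f.range := f.codRestrict f.range (fun x => ⟨x, rfl⟩)
  have hg : Function.Surjective g := by
    rintro ⟨_, x, rfl⟩
    exact ⟨x, rfl⟩
  have hsat : g ⁻¹' (g '' K) = K := by
    refine Set.Subset.antisymm ?_ (Set.subset_preimage_image _ _)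
    rintro x ⟨y, hy, hyx⟩
    have hxy : f (x - y) = 0 := by
      rw [map_sub, sub_eq_zero]
      exact congrArg Subtype.val hyx.symm
    simpa using K.add_mem (hker hxy) hy
  have hgK : IsClosed (g '' K) :=
    (g.isQuotientMap hg).isClosed_preimage.mp (by rw [hsat]; exact hK)
  have himage : f '' K = Subtype.val '' (g '' K) := by
    rw [Set.image_image]
    rfl
  rw [himage]
  exact hR.isClosedEmbedding_subtypeVal.isClosedMap _ hgK

theorem Ideal.IsMaximal.exists_sub_algebraMap_mem {B : Type*} [NormedCommRing B]
    [NormedAlgebra ℂ B] [CompleteSpace B] {M : Ideal B} (hM : M.IsMaximal) (b : B) :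
    ∃ l : ℂ, b - algebraMap ℂ B l ∈ M := by
  let ψ : B →ₐ[ℂ] ℂ := WeakDual.CharacterSpace.equivAlgHom M.toCharacterSpace
  have hMker : M = RingHom.ker ψ :=
    hM.eq_of_le (RingHom.ker_ne_top _) fun m hm => M.toCharacterSpace_apply_eq_zero_of_mem hm
  refine ⟨ψ b, ?_⟩
  rw [hMker, RingHom.mem_ker, map_sub, AlgHom.commutes, Algebra.algebraMap_self_apply, sub_self]

theorem Submodule.IsTopCompl.exists_norm_le_norm_add {𝕜 E : Type*} [NontriviallyNormedField 𝕜]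
    [NormedAddCommGroup E] [NormedSpace 𝕜 E] {p q : Submodule 𝕜 E} (h : p.IsTopCompl q) :
    ∃ C, ∀ u ∈ p, ∀ v ∈ q, ‖u‖ ≤ C * ‖u + v‖ := by
  refine ⟨‖p.projectionL q h‖, fun u hu v hv => ?_⟩
  calc ‖u‖ = ‖p.projectionL q h (u + v)‖ := by
        rw [map_add, projectionL_apply_left h ⟨u, hu⟩, projectionL_apply_right h ⟨v, hv⟩, add_zero]
    _ ≤ ‖p.projectionL q h‖ * ‖u + v‖ := le_opNorm _ _

namespace Subalgebra

section Field

variable {𝕜 X : Type*} [NontriviallyNormedField 𝕜] [NormedAddCommGroup X] [NormedSpace 𝕜 X]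
  (A : Subalgebra 𝕜 (X →L[𝕜] X))

noncomputable def evalCLM (x : X) : A →L[𝕜] X :=
  (ContinuousLinearMap.apply 𝕜 X x).comp (Subalgebra.toSubmodule A).subtypeL

@[simp]
theorem evalCLM_apply (x : X) (a : A) : A.evalCLM x a = (a : X →L[𝕜] X) x := rfl

/-- The subspace `A x`, which is `A/I` under `a + I ↦ a x` when `I` is the annihilator of `x`. -/
noncomputable def orbit (x : X) : Submodule 𝕜 X := (A.evalCLM x).range

theorem mem_orbit {x y : X} : y ∈ A.orbit x ↔ ∃ a : A, (a : X →L[𝕜] X) x = y := Iff.rfl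

theorem apply_mem_orbit (x : X) (a : A) : (a : X →L[𝕜] X) x ∈ A.orbit x := ⟨a, rfl⟩

theorem self_mem_orbit (x : X) : x ∈ A.orbit x := ⟨1, rfl⟩

theorem coe_orbit (x : X) : (A.orbit x : Set X) = {y : X | ∃ a ∈ A, a x = y} := by
  ext y
  exact ⟨fun ⟨a, ha⟩ => ⟨a, a.2, ha⟩, fun ⟨a, ha, hy⟩ => ⟨⟨a, ha⟩, hy⟩⟩

def IsInvariant (K : Submodule 𝕜 X) : Prop := ∀ a ∈ A, ∀ y ∈ K, a y ∈ K

def algLat : Set (X →L[𝕜] X) :=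
  {T | ∀ K : Submodule 𝕜 X, IsClosed (K : Set X) → A.IsInvariant K → ∀ y ∈ K, T y ∈ K}

theorem isInvariant_orbit (x : X) : A.IsInvariant (A.orbit x) := by
  rintro a ha _ ⟨c, rfl⟩
  exact ⟨⟨a, ha⟩ * c, rfl⟩

theorem sub_mem_algLat {T S : X →L[𝕜] X} (hT : T ∈ A.algLat) (hS : S ∈ A) : T - S ∈ A.algLat :=
  fun K hK hinv y hy => K.sub_mem (hT K hK hinv y hy) (hinv S hS y hy)

theorem apply_mem_orbit_of_mem_algLat {T : X →L[𝕜] X} (hT : T ∈ A.algLat) {x : X}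
    (hx : IsClosed (A.orbit x : Set X)) {y : X} (hy : y ∈ A.orbit x) : T y ∈ A.orbit x :=
  hT _ hx (A.isInvariant_orbit x) y hy

theorem isCompl_orbit {x₁ x₂ : X} (hspan : ∀ y : X, ∃ a ∈ A, ∃ b ∈ A, y = a x₁ + b x₂)
    (hind : ∀ a ∈ A, ∀ b ∈ A, a x₁ + b x₂ = 0 → a x₁ = 0 ∧ b x₂ = 0) :
    IsCompl (A.orbit x₁) (A.orbit x₂) := by
  refine ⟨Submodule.disjoint_def.mpr ?_, Submodule.codisjoint_iff_exists_add_eq.mpr fun y => ?_⟩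
  · rintro _ ⟨a, rfl⟩ hy
    obtain ⟨b, hb⟩ := A.mem_orbit.mp hy
    refine (hind a a.2 (-b) (-b).2 ?_).1
    simp [hb]
  · obtain ⟨a, ha, b, hb, rfl⟩ := hspan y
    exact ⟨_, _, A.apply_mem_orbit x₁ ⟨a, ha⟩, A.apply_mem_orbit x₂ ⟨b, hb⟩, rfl⟩

theorem apply_apply_comm (hcomm : ∀ a ∈ A, ∀ b ∈ A, a * b = b * a) (a b : A) (y : X) :
    (a : X →L[𝕜] X) ((b : X →L[𝕜] X) y) = (b : X →L[𝕜] X) ((a : X →L[𝕜] X) y) :=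
  congrArg (· y) (hcomm _ a.2 _ b.2)

variable [CompleteSpace X] [CompleteSpace A]

/-- Open mapping for `(b, c) ↦ b x₁ + c x₂`: write `y = b x₁ + c x₂` with `‖b‖, ‖c‖ ≤ C ‖y‖`;
then `a y = b (a x₁) + c (a x₂)`. -/
theorem exists_norm_le_of_codisjoint (hcomm : ∀ a ∈ A, ∀ b ∈ A, a * b = b * a) {x₁ x₂ : X}
    (h : Codisjoint (A.orbit x₁) (A.orbit x₂)) :
    ∃ C > 0, ∀ a : A, ‖a‖ ≤ C * (‖(a : X →L[𝕜] X) x₁‖ + ‖(a : X →L[𝕜] X) x₂‖) := by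
  let Ψ := (A.evalCLM x₁).coprod (A.evalCLM x₂)
  have hΨ : Function.Surjective Ψ := by
    intro y
    obtain ⟨_, _, ⟨b, rfl⟩, ⟨c, rfl⟩, hy⟩ := Submodule.codisjoint_iff_exists_add_eq.mp h y
    exact ⟨(b, c), hy⟩
  obtain ⟨C, hC, hpre⟩ := Ψ.exists_preimage_norm_le hΨ
  refine ⟨C, hC, fun a => opNorm_le_bound _ (by positivity) fun y => ?_⟩
  obtain ⟨⟨b, c⟩, rfl, hbc⟩ := hpre y
  set a₁ := (a : X →L[𝕜] X) x₁
  set a₂ := (a : X →L[𝕜] X) x₂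
  calc ‖(a : X →L[𝕜] X) (Ψ (b, c))‖
      = ‖(b : X →L[𝕜] X) a₁ + (c : X →L[𝕜] X) a₂‖ := by
        simp [Ψ, a₁, a₂, A.apply_apply_comm hcomm a]
    _ ≤ ‖b‖ * ‖a₁‖ + ‖c‖ * ‖a₂‖ := norm_add_le_of_le (le_opNorm _ _) (le_opNorm _ _)
    _ ≤ C * ‖Ψ (b, c)‖ * ‖a₁‖ + C * ‖Ψ (b, c)‖ * ‖a₂‖ := by
        gcongr
        · exact (norm_fst_le (b, c)).trans hbc
        · exact (norm_snd_le (b, c)).trans hbc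
    _ = C * (‖a₁‖ + ‖a₂‖) * ‖Ψ (b, c)‖ := by ring

theorem isClosed_orbit_add (hcomm : ∀ a ∈ A, ∀ b ∈ A, a * b = b * a) {x₁ x₂ : X}
    (h : IsCompl (A.orbit x₁) (A.orbit x₂)) (h₁ : IsClosed (A.orbit x₁ : Set X))
    (h₂ : IsClosed (A.orbit x₂ : Set X)) : IsClosed (A.orbit (x₁ + x₂) : Set X) := by
  have htop := Submodule.IsCompl.isTopCompl_of_isClosed h h₁ h₂
  obtain ⟨C, hC, hnorm⟩ := A.exists_norm_le_of_codisjoint hcomm h.codisjoint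
  obtain ⟨K₁, hK₁⟩ := htop.exists_norm_le_norm_add
  obtain ⟨K₂, hK₂⟩ := htop.symm.exists_norm_le_norm_add
  have hbound : ∀ a : A, ‖a‖ ≤ (C * (K₁ + K₂)).toNNReal * ‖A.evalCLM (x₁ + x₂) a‖ := by
    intro a
    set a₁ := (a : X →L[𝕜] X) x₁
    set a₂ := (a : X →L[𝕜] X) x₂
    have ha : A.evalCLM (x₁ + x₂) a = a₁ + a₂ := map_add (a : X →L[𝕜] X) x₁ x₂
    calc ‖a‖ ≤ C * (‖a₁‖ + ‖a₂‖) := hnorm a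
      _ ≤ C * (K₁ * ‖a₁ + a₂‖ + K₂ * ‖a₂ + a₁‖) := by
        gcongr
        · exact hK₁ _ (A.apply_mem_orbit x₁ a) _ (A.apply_mem_orbit x₂ a)
        · exact hK₂ _ (A.apply_mem_orbit x₂ a) _ (A.apply_mem_orbit x₁ a)
      _ = C * (K₁ + K₂) * ‖A.evalCLM (x₁ + x₂) a‖ := by rw [ha, add_comm a₂]; ring
      _ ≤ _ := by gcongr; exact Real.le_coe_toNNReal _
  rw [orbit, LinearMap.coe_range]
  exact ((A.evalCLM (x₁ + x₂)).antilipschitz_of_bound hbound).isClosed_range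
    (A.evalCLM (x₁ + x₂)).uniformContinuous

theorem exists_apply_eq_of_mem_algLat (hcomm : ∀ a ∈ A, ∀ b ∈ A, a * b = b * a) {x₁ x₂ : X}
    (h : IsCompl (A.orbit x₁) (A.orbit x₂)) (h₁ : IsClosed (A.orbit x₁ : Set X))
    (h₂ : IsClosed (A.orbit x₂ : Set X)) {T : X →L[𝕜] X} (hT : T ∈ A.algLat) :
    ∃ a₀ : A, T x₁ = (a₀ : X →L[𝕜] X) x₁ ∧ T x₂ = (a₀ : X →L[𝕜] X) x₂ := by
  obtain ⟨a₀, ha₀⟩ := A.mem_orbit.mp <|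
    A.apply_mem_orbit_of_mem_algLat hT (A.isClosed_orbit_add hcomm h h₁ h₂) (A.self_mem_orbit _)
  obtain ⟨a₁, ha₁⟩ := A.mem_orbit.mp <| A.apply_mem_orbit_of_mem_algLat hT h₁ (A.self_mem_orbit x₁)
  obtain ⟨a₂, ha₂⟩ := A.mem_orbit.mp <| A.apply_mem_orbit_of_mem_algLat hT h₂ (A.self_mem_orbit x₂)
  rw [map_add, map_add] at ha₀
  have hsplit : T x₁ - (a₀ : X →L[𝕜] X) x₁ = (a₀ : X →L[𝕜] X) x₂ - T x₂ := by
    rw [sub_eq_sub_iff_add_eq_add, ← ha₀, add_comm]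
  have hzero : T x₁ - (a₀ : X →L[𝕜] X) x₁ = 0 := by
    refine Submodule.disjoint_def.mp h.disjoint _ ⟨a₁ - a₀, by simp [ha₁]⟩ ?_
    rw [hsplit]
    exact ⟨a₀ - a₂, by simp [ha₂]⟩
  refine ⟨a₀, sub_eq_zero.mp hzero, ?_⟩
  rw [hzero, eq_comm, sub_eq_zero] at hsplit
  exact hsplit.symm

end Field

section Complex

variable {X : Type*} [NormedAddCommGroup X] [NormedSpace ℂ X] (A : Subalgebra ℂ (X →L[ℂ] X))

noncomputable def idealOrbit (x : X) (M : Ideal A) : Submodule ℂ X :=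
  (M.restrictScalars ℂ).map (A.evalCLM x : A →ₗ[ℂ] X)

theorem mem_idealOrbit {x y : X} {M : Ideal A} :
    y ∈ A.idealOrbit x M ↔ ∃ c ∈ M, (c : X →L[ℂ] X) x = y := Iff.rfl

theorem isInvariant_idealOrbit (x : X) (M : Ideal A) : A.IsInvariant (A.idealOrbit x M) := by
  rintro a ha _ ⟨c, hc, rfl⟩
  exact ⟨⟨a, ha⟩ * c, M.mul_mem_left _ hc, rfl⟩

variable [CompleteSpace X] [CompleteSpace A]

theorem isClosed_idealOrbit {x : X} (hx : IsClosed (A.orbit x : Set X)) {M : Ideal A}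
    (hM : M.IsMaximal) (hle : annIdeal A x ≤ M) : IsClosed (A.idealOrbit x M : Set X) := by
  rw [idealOrbit, Submodule.map_coe]
  rw [orbit, LinearMap.coe_range] at hx
  exact (A.evalCLM x).isClosed_image_of_ker_le hx hM.isClosed hle

theorem apply_mem_idealOrbit (hcomm : ∀ a ∈ A, ∀ b ∈ A, a * b = b * a) {x : X}
    (hx : IsClosed (A.orbit x : Set X)) {S : X →L[ℂ] X} (hS : S ∈ A.algLat) (hSx : S x = 0)
    {M : Ideal A} (hM : M.IsMaximal) (hle : annIdeal A x ≤ M) (a : A) :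
    S ((a : X →L[ℂ] X) x) ∈ A.idealOrbit x M := by
  let _ : NormedCommRing A :=
    { (inferInstance : NormedRing A) with mul_comm := fun a b => Subtype.ext (hcomm _ a.2 _ b.2) }
  obtain ⟨l, hl⟩ := hM.exists_sub_algebraMap_mem a
  have hax : (a : X →L[ℂ] X) x = ((a - algebraMap ℂ A l : A) : X →L[ℂ] X) x + l • x := by
    simp [Algebra.algebraMap_eq_smul_one]
  rw [hax, map_add, map_smul, hSx, smul_zero, add_zero]
  exact hS _ (A.isClosed_idealOrbit hx hM hle) (A.isInvariant_idealOrbit x M) _ ⟨_, hl, rfl⟩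

theorem exists_inRadical_of_apply_eq_zero (hcomm : ∀ a ∈ A, ∀ b ∈ A, a * b = b * a) {x : X}
    (hx : IsClosed (A.orbit x : Set X)) {S : X →L[ℂ] X} (hS : S ∈ A.algLat) (hSx : S x = 0)
    (a : A) : ∃ c : A, inRadical A x c ∧ S ((a : X →L[ℂ] X) x) = (c : X →L[ℂ] X) x := by
  obtain ⟨c, hc⟩ := A.mem_orbit.mp (A.apply_mem_orbit_of_mem_algLat hS hx (A.apply_mem_orbit x a))
  refine ⟨c, fun M hM hle => ?_, hc.symm⟩
  obtain ⟨m, hm, hmc⟩ := A.mem_idealOrbit.mp (A.apply_mem_idealOrbit hcomm hx hS hSx hM hle a)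
  have hcm : c - m ∈ annIdeal A x := by
    change ((c - m : A) : X →L[ℂ] X) x = 0
    simp [hc, hmc]
  simpa using M.add_mem (hle hcm) hm

end Complex

end Subalgebra

/-- Let `A ⊆ B(X)` be an abelian, unital, norm-closed operator algebra of split
strict multiplicity `2`. For every `T ∈ algLat A` there is `a₀ ∈ A` with
`(T - T_{a₀}) x ∈ R₁ ⊕ R₂` for all `x`, where `Rⱼ` is the radical of `A/Iⱼ`. -/
theorem stmt8 {X : Type*} [NormedAddCommGroup X] [NormedSpace ℂ X] [CompleteSpace X]
    (A : Subalgebra ℂ (X →L[ℂ] X))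
    (hA : IsClosed (A : Set (X →L[ℂ] X)))
    (hcomm : ∀ a ∈ A, ∀ b ∈ A, a * b = b * a)
    (x₁ x₂ : X)
    (hc1 : IsClosed {y : X | ∃ a ∈ A, a x₁ = y})
    (hc2 : IsClosed {y : X | ∃ a ∈ A, a x₂ = y})
    (hspan : ∀ y : X, ∃ a ∈ A, ∃ b ∈ A, y = a x₁ + b x₂)
    (hind : ∀ a ∈ A, ∀ b ∈ A, a x₁ + b x₂ = 0 → a x₁ = 0 ∧ b x₂ = 0)
    (T : X →L[ℂ] X)
    (hT : ∀ K : Submodule ℂ X, IsClosed (K : Set X) →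
      (∀ a ∈ A, ∀ y ∈ K, a y ∈ K) → ∀ y ∈ K, T y ∈ K) :
    ∃ a₀ ∈ A, ∀ y : X, ∃ c₁ c₂ : ↥A,
      inRadical A x₁ c₁ ∧ inRadical A x₂ c₂ ∧
      T y - a₀ y = ((c₁ : X →L[ℂ] X)) x₁ + ((c₂ : X →L[ℂ] X)) x₂ := by
  have : CompleteSpace A := hA.completeSpace_coe
  have h₁ : IsClosed (A.orbit x₁ : Set X) := by rwa [Subalgebra.coe_orbit]
  have h₂ : IsClosed (A.orbit x₂ : Set X) := by rwa [Subalgebra.coe_orbit]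
  have hT : T ∈ A.algLat := hT
  obtain ⟨a₀, hTx₁, hTx₂⟩ :=
    A.exists_apply_eq_of_mem_algLat hcomm (A.isCompl_orbit hspan hind) h₁ h₂ hT
  have hS : T - a₀ ∈ A.algLat := A.sub_mem_algLat hT a₀.2
  refine ⟨a₀, a₀.2, fun y => ?_⟩
  obtain ⟨a, ha, b, hb, rfl⟩ := hspan y
  obtain ⟨c₁, hc₁, e₁⟩ := A.exists_inRadical_of_apply_eq_zero hcomm h₁ hS (by simp [hTx₁]) ⟨a, ha⟩
  obtain ⟨c₂, hc₂, e₂⟩ := A.exists_inRadical_of_apply_eq_zero hcomm h₂ hS (by simp [hTx₂]) ⟨b, hb⟩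
  refine ⟨c₁, c₂, hc₁, hc₂, ?_⟩
  rw [← e₁, ← e₂]
  simp only [sub_apply, map_add]
  abel
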